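/- arXiv:1309.6558 — 6 statements merged into one kernel-verified Lean document; each statement's English description precedes it below -/
import Mathlib

section
/- Let E₁ and E₂ be elliptic curves and C ⊆ E₁ × E₂ an irreducible curve with C·F₁ = C·F₂ = 2, where F₁, F₂ are fibers of the two projections. Then C² ≤ 8, and hence the arithmetic genus of C is at most 5. -/
/-- On the abelian surface `E₁ × E₂` (trivial canonical class) with fiber
classes `f₁, f₂` satisfying `f₁² = f₂² = 0`, `f₁·f₂ = 1`, let `c` be the class of an
irreducible curve with `c·f₁ = c·f₂ = 2`.  The Hodge index theorem (stated for
`h = f₁ + f₂` with `h² = 2 > 0`) gives `c² ≤ 8`, and hence the arithmetic genus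
`pa = c²/2 + 1` is at most 5. -/
theorem stmt_2
    {M : Type*} [AddCommGroup M] [Module ℤ M]
    (B : M →ₗ[ℤ] M →ₗ[ℤ] ℤ)
    (hB : ∀ x y : M, B x y = B y x)
    (c f₁ f₂ : M)
    (hf₁ : B f₁ f₁ = 0) (hf₂ : B f₂ f₂ = 0) (hf₁₂ : B f₁ f₂ = 1)
    (hcf₁ : B c f₁ = 2) (hcf₂ : B c f₂ = 2)
    -- Hodge index theorem: classes orthogonal to the ample class `f₁ + f₂` have
    -- nonpositive self-intersection
    (hhodge : ∀ x : M, B (f₁ + f₂) x = 0 → B x x ≤ 0) :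
    B c c ≤ 8 ∧ ∀ pa : ℤ, 2 * pa - 2 = B c c → pa ≤ 5 := by
  have key := hhodge (c - (2:ℤ) • f₁ - (2:ℤ) • f₂) (by
    simp [map_sub, map_smul, LinearMap.sub_apply, LinearMap.smul_apply, smul_eq_mul,
      hf₁, hf₂, hf₁₂, hB f₁ c, hB f₂ c, hB f₂ f₁, hcf₁, hcf₂])
  simp [map_sub, map_smul, LinearMap.sub_apply, LinearMap.smul_apply, smul_eq_mul,
    hf₁, hf₂, hf₁₂, hB f₁ c, hB f₂ c, hB f₂ f₁, hcf₁, hcf₂] at key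
  constructor
  · linarith
  · intro pa hpa; linarith
end

section
/- Let ℍ_ℂ denote the complexified quaternion algebra ℍ ⊗_ℝ ℂ and let h ∈ ℍ_ℂ satisfy h² = −1 with h coming from a real quaternion. Then the left annihilator of (i − h) in ℍ_ℂ equals the left ideal ℍ_ℂ·(i + h). -/
/-- In the complexified quaternion algebra `ℍ_ℂ = ℍ ⊗_ℝ ℂ ≅ Quaternion ℂ`,
let `h` be a (complexification of a) real quaternion with `h² = -1`, and let `i` denote the
central complex scalar `Complex.I`.  Then the left annihilator of `(i - h)` equals the left
ideal `ℍ_ℂ·(i + h)`. -/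
theorem stmt_5
    (h : Quaternion ℂ)
    -- `h` comes from a real quaternion: all four components are real
    (hreal : h.re.im = 0 ∧ h.imI.im = 0 ∧ h.imJ.im = 0 ∧ h.imK.im = 0)
    (hh : h ^ 2 = -1) :
    {q : Quaternion ℂ | q * ((Complex.I : Quaternion ℂ) - h) = 0} =
      {q : Quaternion ℂ | ∃ a : Quaternion ℂ, q = a * ((Complex.I : Quaternion ℂ) + h)} := by
  have hh2 : h * h = -1 := by rw [← sq]; exact hh
  have hI2 : (Complex.I : Quaternion ℂ) * (Complex.I : Quaternion ℂ) = -1 := by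
    rw [← Quaternion.coe_mul, Complex.I_mul_I]; simp
  have hc : ∀ x : Quaternion ℂ, x * (Complex.I : Quaternion ℂ) = (Complex.I : Quaternion ℂ) * x :=
    fun x => ((Quaternion.coe_commute Complex.I x)).symm.eq
  have hzero : ((Complex.I : Quaternion ℂ) + h) * ((Complex.I : Quaternion ℂ) - h) = 0 := by
    have e : ((Complex.I : Quaternion ℂ) + h) * ((Complex.I : Quaternion ℂ) - h)
        = (Complex.I : Quaternion ℂ) * (Complex.I : Quaternion ℂ)
          - (Complex.I : Quaternion ℂ) * h + (h * (Complex.I : Quaternion ℂ) - h * h) := by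
      noncomm_ring
    rw [e, hI2, hh2, hc h]; abel
  ext q
  simp only [Set.mem_setOf_eq]
  constructor
  · intro hq
    refine ⟨(((2 * Complex.I)⁻¹ : ℂ) : Quaternion ℂ) * q, ?_⟩
    have h0 : q * (Complex.I : Quaternion ℂ) - q * h = 0 := by rw [← mul_sub]; exact hq
    have hqh : q * h = q * (Complex.I : Quaternion ℂ) := (sub_eq_zero.mp h0).symm
    have coe2 : ((2 : ℂ) : Quaternion ℂ) = 2 := by
      rw [show (2:ℂ) = (1:ℂ) + 1 by norm_num, Quaternion.coe_add, Quaternion.coe_one]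
      norm_num
    have key : q * ((Complex.I : Quaternion ℂ) + h)
        = ((2 * Complex.I : ℂ) : Quaternion ℂ) * q := by
      rw [mul_add, hqh, ← two_mul, hc q, ← mul_assoc, Quaternion.coe_mul, coe2]
    rw [mul_assoc, key, ← mul_assoc, ← Quaternion.coe_mul,
      inv_mul_cancel₀ (by simp : (2 * Complex.I : ℂ) ≠ 0), Quaternion.coe_one, one_mul]
  · rintro ⟨a, rfl⟩
    rw [mul_assoc, hzero, mul_zero]
end

section
/- Let 𝔻ℍ_ℂ be the algebra of dual quaternions with complex coefficients, and let h₁, h₂ ∈ 𝔻ℍ (real dual quaternions) satisfy h₁² = h₂² = −1. Then the set { x ∈ 𝔻ℍ_ℂ : (i − h₂)·x·(i − h₁) = 0 } is a free module of rank 3 over the complex dual numbers 𝔻_ℂ = ℂ[ε]/(ε²). -/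
/-!
Over `𝔻_ℂ` the dual quaternions `𝔻ℍ_ℂ` are the quaternions `ℍ[𝔻_ℂ]`. A real `h` with `h² = -1`
is pure, so `E = i - h` is null: `E * star E = i² - h² = 0`. For a null `E` one has
`E y E = 2 re (y E) • E`, and expanding `(E₂ a E₁) b (E₂ x E₁)` in two ways gives
`re (a E₁ b E₂) • E₂ x E₁ = re (x E₁ b E₂) • E₂ a E₁`. Since `re E₁ re E₂ = i² = -1` is a unit,
some `re (a E₁ b E₂)` is a unit, and then the solutions of `E₂ x E₁ = 0` are exactly the kernel
of the surjective linear form `x ↦ re (x E₁ b E₂)` on the free module `ℍ[𝔻_ℂ]` of rank 4.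
Over the local ring `𝔻_ℂ` this kernel, a direct summand, is free of rank 3.
-/

/-- complexification of a real quaternion -/
noncomputable def quatC (q : Quaternion ℝ) : Quaternion ℂ :=
  ⟨(q.re : ℂ), (q.imI : ℂ), (q.imJ : ℂ), (q.imK : ℂ)⟩

/-- complexification `𝔻ℍ → 𝔻ℍ_ℂ` of a real dual quaternion -/
noncomputable def dualQuatC (d : DualNumber (Quaternion ℝ)) : DualNumber (Quaternion ℂ) :=
  (quatC d.fst, quatC d.snd)

/-- embedding of the complex dual numbers `𝔻_ℂ = ℂ[ε]/(ε²)` into `𝔻ℍ_ℂ` (central scalars) -/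
noncomputable def scalarDQ (c : DualNumber ℂ) : DualNumber (Quaternion ℂ) :=
  ((c.fst : Quaternion ℂ), (c.snd : Quaternion ℂ))

/-- the central complex unit `i` in `𝔻ℍ_ℂ` -/
noncomputable def iDQ : DualNumber (Quaternion ℂ) := ((Complex.I : Quaternion ℂ), 0)

open Module

theorem LinearMap.nonempty_basis_ker_of_surjective {R M : Type*} [CommRing R] [IsLocalRing R]
    [AddCommGroup M] [Module R M] [Module.Free R M] [Module.Finite R M] {n : ℕ}
    (hM : finrank R M = n + 1) {f : M →ₗ[R] R} (hf : Function.Surjective f) :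
    Nonempty (Basis (Fin n) R (LinearMap.ker f)) := by
  obtain ⟨s, hs⟩ := f.exists_rightInverse_of_surjective (LinearMap.range_eq_top.2 hf)
  have hfs : ∀ r, f (s r) = r := fun r => LinearMap.congr_fun hs r
  let π : M →ₗ[R] LinearMap.ker f :=
    (LinearMap.id - s ∘ₗ f).codRestrict (LinearMap.ker f) fun x => by simp [hfs]
  have hπ : π ∘ₗ (LinearMap.ker f).subtype = LinearMap.id := by
    ext x; simp [π]
  have : Module.Projective R (LinearMap.ker f) := .of_split _ _ hπ
  have : Module.Finite R (LinearMap.ker f) :=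
    .of_surjective π fun x => ⟨x, LinearMap.congr_fun hπ x⟩
  have : Module.Free R (LinearMap.ker f) := Module.free_of_flat_of_isLocalRing
  let e : M ≃ₗ[R] LinearMap.ker f × R :=
    .ofLinearMap (f := π.prod f) (g := (LinearMap.ker f).subtype.coprod s)
      (by ext x <;> simp [π, hfs]) (by ext x; simp [π])
  have hker : finrank R (LinearMap.ker f) = n := by
    have := e.finrank_eq
    rw [finrank_prod, finrank_self, hM] at this
    omega
  exact ⟨Module.finBasisOfFinrankEq R _ hker⟩

namespace Quaternion

section CommRing

variable {R : Type*} [CommRing R]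

theorem re_mul_comm (a b : ℍ[R]) : (a * b).re = (b * a).re := by
  simp only [re_mul]; ring

theorem coe_sub_mul_star_coe_sub {ι : R} (hι : ι * ι = -1) {h : ℍ[R]} (hre : h.re = 0)
    (hh : h * h = -1) : (↑ι - h) * star (↑ι - h) = 0 := by
  have hstar : star h = -h := eq_neg_of_add_eq_zero_right (by rw [self_add_star, hre]; simp)
  rw [star_sub, star_coe, hstar, sub_neg_eq_add,
    show (↑ι - h) * (↑ι + h) = ↑(ι * ι) - h * h + (↑ι * h - h * ↑ι) by rw [coe_mul]; noncomm_ring,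
    coe_commutes, sub_self, hh, hι]
  simp

theorem mul_mul_self_eq_smul {E : ℍ[R]} (hE : E * star E = 0) (y : ℍ[R]) :
    E * y * E = (2 * (y * E).re) • E := by
  have h : y * E = ↑(2 * (y * E).re) - star E * star y := by
    rw [← star_mul, eq_sub_iff_add_eq, self_add_star']
  conv_lhs => rw [mul_assoc, h, mul_sub, ← mul_assoc E, hE, zero_mul, sub_zero, mul_coe_eq_smul]

section Sandwich

variable {E₁ E₂ : ℍ[R]} (hE₁ : E₁ * star E₁ = 0) (hE₂ : E₂ * star E₂ = 0)
include hE₁ hE₂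

theorem smul_mul_mul_eq_smul_mul_mul (a b x : ℍ[R]) :
    (2 * (a * (E₁ * b * E₂)).re) • (E₂ * x * E₁) =
      (2 * (x * (E₁ * b * E₂)).re) • (E₂ * a * E₁) := by
  have hre : (b * E₂ * x * E₁).re = (x * (E₁ * b * E₂)).re := by
    rw [show b * E₂ * x * E₁ = (b * E₂) * (x * E₁) by noncomm_ring, re_mul_comm]
    noncomm_ring
  calc (2 * (a * (E₁ * b * E₂)).re) • (E₂ * x * E₁)
      = E₂ * (a * E₁ * b) * E₂ * (x * E₁) := by
        rw [mul_mul_self_eq_smul hE₂, smul_mul_assoc]; noncomm_ring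
    _ = E₂ * a * (E₁ * (b * E₂ * x) * E₁) := by noncomm_ring
    _ = (2 * (x * (E₁ * b * E₂)).re) • (E₂ * a * E₁) := by
        rw [mul_mul_self_eq_smul hE₁, mul_smul_comm, hre]

theorem mul_mul_eq_zero_iff (h2 : IsUnit (2 : R)) {a b : ℍ[R]}
    (hab : IsUnit (a * (E₁ * b * E₂)).re) (x : ℍ[R]) :
    E₂ * x * E₁ = 0 ↔ (x * (E₁ * b * E₂)).re = 0 := by
  replace hab := h2.mul hab
  have key := smul_mul_mul_eq_smul_mul_mul hE₁ hE₂ a b x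
  constructor
  · intro hx
    have hre : (E₂ * a * E₁ * b).re = (a * (E₁ * b * E₂)).re := by
      rw [show E₂ * a * E₁ * b = E₂ * (a * E₁ * b) by noncomm_ring, re_mul_comm]
      simp only [mul_assoc]
    have h : 2 * (a * (E₁ * b * E₂)).re * (x * (E₁ * b * E₂)).re = 0 :=
      calc 2 * (a * (E₁ * b * E₂)).re * (x * (E₁ * b * E₂)).re
          = ((2 * (x * (E₁ * b * E₂)).re) • (E₂ * a * E₁) * b).re := by
            rw [smul_mul_assoc, re_smul, smul_eq_mul, hre]; ring
        _ = 0 := by rw [← key, hx, smul_zero, zero_mul, re_zero]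
    exact hab.mul_right_eq_zero.mp h
  · intro hx
    rwa [hx, mul_zero, zero_smul, hab.smul_eq_zero] at key

end Sandwich

theorem exists_isUnit_re_mul [IsLocalRing R] (h2 : IsUnit (2 : R)) {E₁ E₂ : ℍ[R]}
    (hre : IsUnit (E₁.re * E₂.re)) : ∃ a b : ℍ[R], IsUnit (a * (E₁ * b * E₂)).re := by
  let e : Fin 4 → ℍ[R] := ![1, ⟨0, 1, 0, 0⟩, ⟨0, 0, 1, 0⟩, ⟨0, 0, 0, 1⟩]
  -- `∑ₘ eₘ y (star eₘ) = 4 re y`, applied to `y = E₁`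
  have hsum : ∑ m, (e m * (E₁ * star (e m) * E₂)).re = 2 * 2 * (E₁.re * E₂.re) := by
    simp only [e, Fin.sum_univ_four, Matrix.cons_val_zero, Matrix.cons_val_one, Matrix.cons_val,
      re_mul, imI_mul, imJ_mul, imK_mul, re_star, imI_star, imJ_star, imK_star, re_one, imI_one,
      imJ_one, imK_one]
    ring
  obtain ⟨m, -, hm⟩ := IsLocalRing.exists_of_isUnit_sum (hsum ▸ (h2.mul h2).mul hre)
  exact ⟨e m, star (e m), hm⟩

theorem exists_basis_mul_mul_eq_zero [IsLocalRing R] (h2 : IsUnit (2 : R)) {E₁ E₂ : ℍ[R]}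
    (hE₁ : E₁ * star E₁ = 0) (hE₂ : E₂ * star E₂ = 0) (hre : IsUnit (E₁.re * E₂.re)) :
    ∃ v : Fin 3 → ℍ[R], (∀ x, E₂ * x * E₁ = 0 ↔ ∃ c : Fin 3 → R, x = ∑ j, c j • v j) ∧
      ∀ c : Fin 3 → R, ∑ j, c j • v j = 0 → c = 0 := by
  obtain ⟨a, b, hab⟩ := exists_isUnit_re_mul h2 hre
  let f : ℍ[R] →ₗ[R] R := QuaternionAlgebra.reₗ _ _ _ ∘ₗ LinearMap.mulRight R (E₁ * b * E₂)
  have hsurj : Function.Surjective f := fun r => ⟨(r * ↑hab.unit⁻¹) • a, by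
    change ((r * ↑hab.unit⁻¹) • a * (E₁ * b * E₂)).re = r
    rw [smul_mul_assoc, re_smul, smul_eq_mul, mul_assoc, hab.val_inv_mul, mul_one]⟩
  obtain ⟨B⟩ := LinearMap.nonempty_basis_ker_of_surjective (n := 3) (by rw [finrank_eq_four]) hsurj
  have hker : ∀ x, E₂ * x * E₁ = 0 ↔ x ∈ LinearMap.ker f := mul_mul_eq_zero_iff hE₁ hE₂ h2 hab
  have hind := B.linearIndependent.map' (LinearMap.ker f).subtype (Submodule.ker_subtype _)
  exact ⟨fun j => B j, fun x => (hker x).trans B.mem_submodule_iff',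
    fun c hc => funext (Fintype.linearIndependent_iff.mp hind c hc)⟩

theorem re_eq_zero_of_mul_add_mul_eq_zero [NoZeroDivisors R] [CharZero R] {A B : ℍ[R]}
    (hA : A * A = -1) (hAB : A * B + B * A = 0) : B.re = 0 := by
  have hABA : A * B * A = B := by
    rw [eq_neg_of_add_eq_zero_left hAB, neg_mul, mul_assoc, hA, mul_neg_one, neg_neg]
  have h : B.re = -B.re := by
    conv_lhs => rw [← hABA, mul_assoc, re_mul_comm, mul_assoc, hA, mul_neg_one, re_neg]
  exact add_self_eq_zero.mp (eq_neg_iff_add_eq_zero.mp h)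

end CommRing

theorem re_eq_zero_of_mul_self_eq_neg_one {A : ℍ[ℝ]} (hA : A * A = -1) : A.re = 0 := by
  have hn : normSq A = 1 := by
    have h := congrArg normSq hA
    rw [map_mul, normSq_neg, map_one] at h
    nlinarith [normSq_nonneg (a := A)]
  rw [← sq_eq_neg_normSq, hn, sq, hA, coe_one]

end Quaternion

open Quaternion

@[simp] theorem re_quatC (q : ℍ[ℝ]) : (quatC q).re = q.re := rfl
@[simp] theorem imI_quatC (q : ℍ[ℝ]) : (quatC q).imI = q.imI := rfl
@[simp] theorem imJ_quatC (q : ℍ[ℝ]) : (quatC q).imJ = q.imJ := rfl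
@[simp] theorem imK_quatC (q : ℍ[ℝ]) : (quatC q).imK = q.imK := rfl
@[simp] theorem fst_dualQuatC (d : DualNumber ℍ[ℝ]) : (dualQuatC d).fst = quatC d.fst := rfl
@[simp] theorem snd_dualQuatC (d : DualNumber ℍ[ℝ]) : (dualQuatC d).snd = quatC d.snd := rfl

theorem quatC_add (p q : ℍ[ℝ]) : quatC (p + q) = quatC p + quatC q := by
  ext <;> simp

theorem quatC_mul (p q : ℍ[ℝ]) : quatC (p * q) = quatC p * quatC q := by
  ext <;> simp [re_mul, imI_mul, imJ_mul, imK_mul]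

theorem dualQuatC_mul (p q : DualNumber ℍ[ℝ]) :
    dualQuatC (p * q) = dualQuatC p * dualQuatC q := by
  ext : 1 <;> simp [quatC_add, quatC_mul]

theorem dualQuatC_neg_one : dualQuatC (-1) = -1 := by
  ext <;> simp

theorem dualNumberEquiv_coe (c : DualNumber ℂ) :
    dualNumberEquiv (c : ℍ[DualNumber ℂ]) = scalarDQ c := by
  ext <;> rfl

theorem dualNumberEquiv_smul (c : DualNumber ℂ) (q : ℍ[DualNumber ℂ]) :
    dualNumberEquiv (c • q) = scalarDQ c * dualNumberEquiv q := by
  rw [← coe_mul_eq_smul, map_mul, dualNumberEquiv_coe]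

theorem iDQ_sub_dualQuatC (h : DualNumber ℍ[ℝ]) :
    iDQ - dualQuatC h = dualNumberEquiv
      (((TrivSqZeroExt.inl Complex.I : DualNumber ℂ) : ℍ[DualNumber ℂ]) -
        dualNumberEquiv.symm (dualQuatC h)) := by
  rw [map_sub, AlgEquiv.apply_symm_apply, dualNumberEquiv_coe]
  rfl

theorem re_dualNumberEquiv_symm_dualQuatC {h : DualNumber ℍ[ℝ]} (hh : h * h = -1) :
    (dualNumberEquiv.symm (dualQuatC h)).re = 0 := by
  have hfst : h.fst * h.fst = -1 := by simpa using congrArg TrivSqZeroExt.fst hh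
  have hsnd : h.fst * h.snd + h.snd * h.fst = 0 := by
    simpa [TrivSqZeroExt.snd_mul] using congrArg TrivSqZeroExt.snd hh
  ext <;> simp [re_eq_zero_of_mul_self_eq_neg_one hfst, re_eq_zero_of_mul_add_mul_eq_zero hfst hsnd]

theorem exists_scalarDQ_basis {E₁ E₂ : ℍ[DualNumber ℂ]} {n : ℕ} {v : Fin n → ℍ[DualNumber ℂ]}
    (hspan : ∀ x, E₂ * x * E₁ = 0 ↔ ∃ c : Fin n → DualNumber ℂ, x = ∑ j, c j • v j)
    (hind : ∀ c : Fin n → DualNumber ℂ, ∑ j, c j • v j = 0 → c = 0) :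
    ∃ b : Fin n → DualNumber (Quaternion ℂ),
      (∀ x, dualNumberEquiv E₂ * x * dualNumberEquiv E₁ = 0 ↔
        ∃ c : Fin n → DualNumber ℂ, x = ∑ j, scalarDQ (c j) * b j) ∧
      (∀ c : Fin n → DualNumber ℂ, (∑ j, scalarDQ (c j) * b j) = 0 → c = 0) := by
  have hsum : ∀ c : Fin n → DualNumber ℂ,
      ∑ j, scalarDQ (c j) * dualNumberEquiv (v j) = dualNumberEquiv (∑ j, c j • v j) := by
    simp [map_sum, dualNumberEquiv_smul]
  refine ⟨fun j => dualNumberEquiv (v j), fun x => ?_, fun c hc => ?_⟩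
  · rw [← (dualNumberEquiv (R := ℂ)).apply_symm_apply x, ← map_mul, ← map_mul,
      map_eq_zero_iff _ (dualNumberEquiv (R := ℂ)).injective, hspan]
    simp only [hsum, (dualNumberEquiv (R := ℂ)).injective.eq_iff]
  · rw [hsum, map_eq_zero_iff _ (dualNumberEquiv (R := ℂ)).injective] at hc
    exact hind c hc

/-- For real dual quaternions `h₁, h₂` with `h₁² = h₂² = -1`, the set
`{x ∈ 𝔻ℍ_ℂ : (i - h₂)·x·(i - h₁) = 0}` is a free module of rank 3 over `𝔻_ℂ`:
there is a family `b : Fin 3 → 𝔻ℍ_ℂ` which spans it over `𝔻_ℂ` and is `𝔻_ℂ`-linearly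
independent. -/
theorem stmt_6
    (h₁ h₂ : DualNumber (Quaternion ℝ))
    (hh₁ : h₁ * h₁ = -1) (hh₂ : h₂ * h₂ = -1) :
    ∃ b : Fin 3 → DualNumber (Quaternion ℂ),
      (∀ x : DualNumber (Quaternion ℂ),
          (iDQ - dualQuatC h₂) * x * (iDQ - dualQuatC h₁) = 0 ↔
            ∃ c : Fin 3 → DualNumber ℂ, x = ∑ j, scalarDQ (c j) * b j) ∧
      (∀ c : Fin 3 → DualNumber ℂ, (∑ j, scalarDQ (c j) * b j) = 0 → c = 0) := by
  have hι : (TrivSqZeroExt.inl Complex.I : DualNumber ℂ) * TrivSqZeroExt.inl Complex.I = -1 := by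
    rw [← TrivSqZeroExt.inl_mul, Complex.I_mul_I, TrivSqZeroExt.inl_neg, TrivSqZeroExt.inl_one]
  have hnull : ∀ h : DualNumber ℍ[ℝ], h * h = -1 →
      dualNumberEquiv.symm (iDQ - dualQuatC h) * star (dualNumberEquiv.symm (iDQ - dualQuatC h))
        = 0 := fun h hh => by
    rw [iDQ_sub_dualQuatC, AlgEquiv.symm_apply_apply]
    exact coe_sub_mul_star_coe_sub hι (re_dualNumberEquiv_symm_dualQuatC hh)
      (by rw [← map_mul, ← dualQuatC_mul, hh, dualQuatC_neg_one, map_neg, map_one])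
  have h2 : IsUnit (2 : DualNumber ℂ) := by
    simpa only [map_ofNat] using (isUnit_of_invertible (2 : ℂ)).map (algebraMap ℂ (DualNumber ℂ))
  have hre : IsUnit ((dualNumberEquiv.symm (iDQ - dualQuatC h₁)).re *
      (dualNumberEquiv.symm (iDQ - dualQuatC h₂)).re) := by
    simp [iDQ_sub_dualQuatC, re_dualNumberEquiv_symm_dualQuatC hh₁,
      re_dualNumberEquiv_symm_dualQuatC hh₂, hι]
  obtain ⟨v, hspan, hind⟩ := exists_basis_mul_mul_eq_zero h2 (hnull h₁ hh₁) (hnull h₂ hh₂) hre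
  simpa only [AlgEquiv.apply_symm_apply] using exists_scalarDQ_basis hspan hind
end

section
/- In the dual quaternions 𝔻ℍ, the group of unit dual quaternions acts transitively by conjugation on the set of elements h with h² = −1 and strictly real norm (i.e., on lines): for any two such h₁, h₂ there exists an invertible g ∈ 𝔻ℍ with h₂ = g h₁ g⁻¹. -/
/-- conjugate of a dual quaternion (quaternion conjugation on both parts) -/
noncomputable def dconj (d : DualNumber (Quaternion ℝ)) : DualNumber (Quaternion ℝ) :=
  (star d.fst, star d.snd)

/-!
Write a line as `h = q + ε p`. The hypothesis that `h h̄` has no dual part forces `h̄ = -h`, so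
`q` and `p` are pure quaternions with `q² = -1` and `q p = -p q` (Plücker coordinates).
A rotation `a + ε 0`, with `a` a unit quaternion intertwining the directions, reduces to the
case of equal directions `q`. Then the moments differ by a pure `r` anticommuting with `q`, and
the translation `1 + ε c` with `c = -(r q)/2` conjugates `q + ε p` to
`q + ε (p + c q - q c) = q + ε (p + r)`.
-/

open scoped Quaternion
open TrivSqZeroExt

namespace Quaternion

theorem star_eq_neg_of_mul_self_eq_neg_one {q : ℍ} (h : q * q = -1) : star q = -q := by
  have hc := Quaternion.ext_iff.mp h
  simp only [re_mul, imI_mul, imJ_mul, imK_mul, re_neg, imI_neg, imJ_neg, imK_neg, re_one,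
    imI_one, imJ_one, imK_one] at hc
  obtain ⟨hre, hi, hj, hk⟩ := hc
  rw [star_eq_neg]
  nlinarith [sq_nonneg q.imI, sq_nonneg q.imJ, sq_nonneg q.imK]

theorem exists_ne_zero_mul_eq_neg_mul {q : ℍ} (hq : q.re = 0) :
    ∃ x : ℍ, x ≠ 0 ∧ x * q = -(q * x) := by
  -- pure quaternions anticommute iff they are orthogonal in `ℝ³`
  by_cases hk : q.imI = 0 ∧ q.imJ = 0
  · refine ⟨(equivProd ℝ).symm (0, 1, 0, 0), fun h ↦ by simpa using congrArg (·.imI) h, ?_⟩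
    ext <;> simp [re_mul, imI_mul, imJ_mul, imK_mul, hq, hk.1, hk.2]
  · refine ⟨(equivProd ℝ).symm (0, -q.imJ, q.imI, 0), fun h ↦ hk ?_, ?_⟩
    · simpa using And.intro (congrArg (·.imJ) h) (congrArg (·.imI) h)
    · ext <;>
        simp only [re_mul, imI_mul, imJ_mul, imK_mul, re_neg, imI_neg, imJ_neg, imK_neg, hq,
          re_equivProd_symm_apply, imI_equivProd_symm_apply, imJ_equivProd_symm_apply,
          imK_equivProd_symm_apply] <;>
        ring

theorem exists_ne_zero_mul_eq_mul {q₁ q₂ : ℍ} (h₁ : q₁ * q₁ = -1) (h₂ : q₂ * q₂ = -1) :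
    ∃ x : ℍ, x ≠ 0 ∧ x * q₁ = q₂ * x := by
  by_cases hx : 1 - q₂ * q₁ = 0
  · have hq₂ : q₂ = -q₁ :=
      calc q₂ = -(q₂ * (q₁ * q₁)) := by rw [h₁, mul_neg_one, neg_neg]
        _ = -q₁ := by rw [← mul_assoc, ← sub_eq_zero.mp hx, one_mul]
    obtain ⟨x, hx0, hx⟩ := exists_ne_zero_mul_eq_neg_mul
      (star_eq_neg.mp (star_eq_neg_of_mul_self_eq_neg_one h₁))
    exact ⟨x, hx0, by rw [hx, hq₂, neg_mul]⟩
  · -- `(1 - q₂ q₁) q₁ = q₁ + q₂ = q₂ (1 - q₂ q₁)`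
    refine ⟨1 - q₂ * q₁, hx, ?_⟩
    rw [sub_mul, mul_sub, mul_assoc, h₁, ← mul_assoc, h₂]
    noncomm_ring

theorem inv_norm_smul_mem_unitary {x : ℍ} (hx : x ≠ 0) : ‖x‖⁻¹ • x ∈ unitary ℍ := by
  have hn : ‖x‖ ≠ 0 := norm_ne_zero_iff.mpr hx
  have hsq : ((‖x‖⁻¹ * ‖x‖⁻¹ * normSq x : ℝ) : ℍ) = 1 := by
    rw [normSq_eq_norm_mul_self]
    field_simp
    simp
  rw [Unitary.mem_iff, Quaternion.star_smul, smul_mul_smul_comm, smul_mul_smul_comm,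
    star_mul_self, self_mul_star, ← coe_mul_eq_smul, ← coe_mul]
  exact ⟨hsq, hsq⟩

theorem exists_mem_unitary_mul_mul_star_eq {q₁ q₂ : ℍ} (h₁ : q₁ * q₁ = -1)
    (h₂ : q₂ * q₂ = -1) : ∃ a ∈ unitary ℍ, a * q₁ * star a = q₂ := by
  obtain ⟨x, hx0, hx⟩ := exists_ne_zero_mul_eq_mul h₁ h₂
  have ha := inv_norm_smul_mem_unitary hx0
  refine ⟨_, ha, ?_⟩
  rw [smul_mul_assoc, hx, ← mul_smul_comm, mul_assoc, Unitary.mul_star_self_of_mem ha, mul_one]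

theorem exists_star_eq_neg_mul_sub_mul_eq {q r : ℍ} (hq : q * q = -1) (hsq : star q = -q)
    (hr : star r = -r) (hqr : q * r = -(r * q)) : ∃ c : ℍ, star c = -c ∧ c * q - q * c = r := by
  refine ⟨-(2⁻¹ : ℝ) • (r * q), ?_, ?_⟩
  · rw [star_smul, star_mul, hsq, hr, neg_mul_neg, hqr, smul_neg]
  · have hrqq : r * q * q = -r := by rw [mul_assoc, hq, mul_neg_one]
    have hqrq : q * (r * q) = r := by rw [← mul_assoc, hqr, neg_mul, hrqq, neg_neg]
    rw [smul_mul_assoc, mul_smul_comm, hrqq, hqrq]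
    module

end Quaternion

@[simp] theorem fst_dconj (d : DualNumber ℍ) : (dconj d).fst = star d.fst := rfl

@[simp] theorem snd_dconj (d : DualNumber ℍ) : (dconj d).snd = star d.snd := rfl

@[simp] theorem dconj_dconj (d : DualNumber ℍ) : dconj (dconj d) = d := by
  ext <;> simp

theorem dconj_mul (x y : DualNumber ℍ) : dconj (x * y) = dconj y * dconj x := by
  ext <;> simp [add_comm]

-- Plücker coordinates: `fst` is the direction of the line and `snd` its moment.
def IsLine (h : DualNumber ℍ) : Prop :=
  h * h = -1 ∧ dconj h = -h

theorem isLine_of_snd_mul_dconj_eq_zero {h : DualNumber ℍ} (hh : h * h = -1)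
    (hn : (h * dconj h).snd = 0) : IsLine h := by
  have hq : h.fst * h.fst = -1 := by simpa using congrArg fst hh
  have hunit : h * dconj h = 1 := by
    ext : 1
    · rw [fst_mul, fst_dconj, Quaternion.star_eq_neg_of_mul_self_eq_neg_one hq, mul_neg, hq,
        neg_neg, fst_one]
    · rw [hn, snd_one]
  refine ⟨hh, ?_⟩
  calc dconj h = -((h * h) * dconj h) := by rw [hh, neg_one_mul, neg_neg]
    _ = -h := by rw [mul_assoc, hunit, mul_one]

namespace IsLine

variable {h : DualNumber ℍ}

theorem fst_mul_self (hl : IsLine h) : h.fst * h.fst = -1 := by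
  simpa using congrArg fst hl.1

theorem star_fst (hl : IsLine h) : star h.fst = -h.fst := by
  simpa using congrArg fst hl.2

theorem star_snd (hl : IsLine h) : star h.snd = -h.snd := by
  simpa using congrArg snd hl.2

theorem fst_mul_snd (hl : IsLine h) : h.fst * h.snd = -(h.snd * h.fst) := by
  have := congrArg snd hl.1
  rw [DualNumber.snd_mul, snd_neg, snd_one, neg_zero] at this
  exact eq_neg_of_add_eq_zero_left this

end IsLine

def IsUnitConj (h₁ h₂ : DualNumber ℍ) : Prop :=
  ∃ g : DualNumber ℍ, g * dconj g = 1 ∧ dconj g * g = 1 ∧ h₂ = g * h₁ * dconj g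

theorem IsUnitConj.trans {h₁ h₂ h₃ : DualNumber ℍ} (h₁₂ : IsUnitConj h₁ h₂)
    (h₂₃ : IsUnitConj h₂ h₃) : IsUnitConj h₁ h₃ := by
  obtain ⟨g, hg, hg', rfl⟩ := h₁₂
  obtain ⟨k, hk, hk', rfl⟩ := h₂₃
  refine ⟨k * g, ?_, ?_, ?_⟩
  · rw [dconj_mul, mul_assoc, ← mul_assoc g, hg, one_mul, hk]
  · rw [dconj_mul, mul_assoc, ← mul_assoc (dconj k), hk', one_mul, hg']
  · rw [dconj_mul]; noncomm_ring

theorem IsUnitConj.isLine {h₁ h₂ : DualNumber ℍ} (hc : IsUnitConj h₁ h₂) (hl : IsLine h₁) :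
    IsLine h₂ := by
  obtain ⟨g, hg, hg', rfl⟩ := hc
  constructor
  · calc g * h₁ * dconj g * (g * h₁ * dconj g) = g * (h₁ * (dconj g * g) * h₁) * dconj g := by
          noncomm_ring
      _ = -1 := by rw [hg', mul_one, hl.1, mul_neg_one, neg_mul, hg]
  · rw [dconj_mul, dconj_mul, dconj_dconj, hl.2]; noncomm_ring

theorem IsLine.exists_isUnitConj_fst_eq {h : DualNumber ℍ} (hl : IsLine h) {q : ℍ}
    (hq : q * q = -1) : ∃ h', IsUnitConj h h' ∧ h'.fst = q := by
  obtain ⟨a, ha, haq⟩ := Quaternion.exists_mem_unitary_mul_mul_star_eq hl.fst_mul_self hq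
  refine ⟨inl a * h * dconj (inl a), ⟨inl a, ?_, ?_, rfl⟩, by simpa using haq⟩
  · ext <;> simp [Unitary.mul_star_self_of_mem ha]
  · ext <;> simp [Unitary.star_mul_self_of_mem ha]

theorem one_add_inr_mul_mul_dconj {c : ℍ} (hc : star c = -c) (h : DualNumber ℍ) :
    (1 + inr c) * h * dconj (1 + inr c) = h + inr (c * h.fst - h.fst * c) := by
  ext : 1
  · simp
  · simp [hc, sub_eq_add_neg, add_comm, add_left_comm, add_assoc]

theorem IsLine.isUnitConj_of_fst_eq {h h' : DualNumber ℍ} (hl : IsLine h) (hl' : IsLine h')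
    (hfst : h.fst = h'.fst) : IsUnitConj h h' := by
  obtain ⟨c, hc, hcomm⟩ := Quaternion.exists_star_eq_neg_mul_sub_mul_eq (r := h'.snd - h.snd)
    hl'.fst_mul_self hl'.star_fst (by rw [star_sub, hl.star_snd, hl'.star_snd]; abel)
    (by rw [mul_sub, sub_mul, hl'.fst_mul_snd, ← hfst, hl.fst_mul_snd]; abel)
  refine ⟨1 + inr c, ?_, ?_, ?_⟩
  · ext : 1 <;> simp [hc]
  · ext : 1 <;> simp [hc]
  · rw [one_add_inr_mul_mul_dconj hc, hfst, hcomm]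
    ext : 1 <;> simp [hfst]

/-- The group of unit dual quaternions acts transitively by conjugation
on lines, i.e. on elements `h ∈ 𝔻ℍ` with `h² = -1` and strictly real norm (the dual part
of `h·h̄` vanishes): for any two such `h₁, h₂` there is an invertible `g` (a unit dual
quaternion, with inverse `dconj g`) such that `h₂ = g·h₁·g⁻¹`. -/
theorem stmt_8
    (h₁ h₂ : DualNumber (Quaternion ℝ))
    (hh₁ : h₁ * h₁ = -1) (hh₂ : h₂ * h₂ = -1)
    (hn₁ : (h₁ * dconj h₁).snd = 0) (hn₂ : (h₂ * dconj h₂).snd = 0) :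
    ∃ g : DualNumber (Quaternion ℝ),
      g * dconj g = 1 ∧ dconj g * g = 1 ∧ h₂ = g * h₁ * dconj g := by
  have hl₁ := isLine_of_snd_mul_dconj_eq_zero hh₁ hn₁
  have hl₂ := isLine_of_snd_mul_dconj_eq_zero hh₂ hn₂
  obtain ⟨h, h₁h, hfst⟩ := hl₁.exists_isUnitConj_fst_eq hl₂.fst_mul_self
  exact h₁h.trans ((h₁h.isLine hl₁).isUnitConj_of_fst_eq hl₂ hfst)
end

section
/- For a real quaternion h with h² = −1 and any real quaternion q with q·(i − h) = 0 in ℍ_ℂ, writing h = g 𝐢 g⁻¹ with g an invertible quaternion, one has 𝔻ℍ_ℂ·(i + 𝐢)·g⁻¹ = 𝔻ℍ_ℂ·g⁻¹·(i + h) = 𝔻ℍ_ℂ·(i + h); in particular the left annihilator ideal of (i − h) is independent of the choice of conjugating element g. -/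
/-- `a ∈ ℍ_ℂ` is (the complexification of) a real quaternion -/
def isRealQuat (a : Quaternion ℂ) : Prop :=
  a.re.im = 0 ∧ a.imI.im = 0 ∧ a.imJ.im = 0 ∧ a.imK.im = 0

/-- embedding `ℍ_ℂ → 𝔻ℍ_ℂ` (primal part) -/
def inlDQ (a : Quaternion ℂ) : DualNumber (Quaternion ℂ) := (a, 0)

/-- the quaternion unit `𝐢` in `ℍ_ℂ` -/
def quatI : Quaternion ℂ := ⟨0, 1, 0, 0⟩

/-!
Conjugating `𝐢` to `h` moves `g⁻¹` across `i + 𝐢`, giving the first equality, and the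
second holds because `g⁻¹` is a unit. For the annihilator: `i` is central, so
`(i + h)(i - h) = i² - h² = 0`, while `(i + h) + (i - h) = 2i` is a central unit; hence
`x (i - h) = 0` forces `x = x (2i)⁻¹ (i + h)`.
-/

theorem setOf_exists_eq_mul_mul_eq_of_isUnit {M : Type*} [Monoid M] {w : M} (hw : IsUnit w)
    (b : M) : {x : M | ∃ a, x = a * (w * b)} = {x | ∃ a, x = a * b} := by
  obtain ⟨w, rfl⟩ := hw
  ext x
  constructor
  · rintro ⟨a, rfl⟩
    exact ⟨a * w, (mul_assoc _ _ _).symm⟩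
  · rintro ⟨a, rfl⟩
    exact ⟨a * ↑w⁻¹, by rw [← mul_assoc, mul_assoc a, Units.inv_mul, mul_one]⟩

theorem setOf_mul_eq_zero_eq_setOf_exists_eq_mul {S : Type*} [Ring S] {u v c : S}
    (hc : IsUnit c) (hcu : Commute c u) (huv : u * v = 0) (hsum : u + v = c) :
    {x : S | x * v = 0} = {x | ∃ a, x = a * u} := by
  obtain ⟨c, rfl⟩ := hc
  ext x
  constructor
  · intro hx
    refine ⟨x * ↑c⁻¹, ?_⟩
    calc x = x * (u + v) * ↑c⁻¹ := by rw [hsum, Units.mul_inv_cancel_right]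
      _ = x * ↑c⁻¹ * u := by
        rw [mul_add, hx, add_zero, mul_assoc, mul_assoc, hcu.units_inv_left.eq]
  · rintro ⟨a, rfl⟩
    rw [Set.mem_ofPred_eq, mul_assoc, huv, mul_zero]

theorem add_mul_eq_mul_add_mul_mul {R : Type*} [Ring R] {c e g gi : R} (hc : Commute c gi)
    (hig : gi * g = 1) : (c + e) * gi = gi * (c + g * e * gi) := by
  rw [add_mul, mul_add, hc.eq, ← mul_assoc, ← mul_assoc, hig, one_mul]

theorem Quaternion.coe_I_mul_coe_I : (Complex.I : Quaternion ℂ) * Complex.I = -1 := by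
  rw [← Quaternion.coe_mul, Complex.I_mul_I, Quaternion.coe_neg, Quaternion.coe_one]

theorem Quaternion.isUnit_coe_I_add_coe_I : IsUnit ((Complex.I : Quaternion ℂ) + Complex.I) := by
  rw [← Quaternion.coe_add]
  have hI : Complex.I + Complex.I ≠ 0 := by simp [← two_mul]
  exact (isUnit_iff_ne_zero.mpr hI).map (algebraMap ℂ (Quaternion ℂ))

def inlDQHom : Quaternion ℂ →+* DualNumber (Quaternion ℂ) := TrivSqZeroExt.inlHom _ _

theorem inlDQHom_apply (a : Quaternion ℂ) : inlDQHom a = inlDQ a := rfl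

theorem stmt_9_general
    (h g gi : Quaternion ℂ)
    (hh : h ^ 2 = -1)
    (hgi : g * gi = 1) (hig : gi * g = 1)
    (hconj : h = g * quatI * gi) :
    ({x : DualNumber (Quaternion ℂ) |
        ∃ a, x = a * inlDQ (((Complex.I : Quaternion ℂ) + quatI) * gi)} =
      {x : DualNumber (Quaternion ℂ) |
        ∃ a, x = a * inlDQ (gi * ((Complex.I : Quaternion ℂ) + h))}) ∧
    ({x : DualNumber (Quaternion ℂ) |
        ∃ a, x = a * inlDQ (gi * ((Complex.I : Quaternion ℂ) + h))} =
      {x : DualNumber (Quaternion ℂ) |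
        ∃ a, x = a * inlDQ ((Complex.I : Quaternion ℂ) + h)}) ∧
    ({x : DualNumber (Quaternion ℂ) | x * inlDQ ((Complex.I : Quaternion ℂ) - h) = 0} =
      {x : DualNumber (Quaternion ℂ) |
        ∃ a, x = a * inlDQ ((Complex.I : Quaternion ℂ) + h)}) := by
  have hcomm (y : Quaternion ℂ) : Commute (Complex.I : Quaternion ℂ) y :=
    Quaternion.coe_commutes _ _
  have hmove : ((Complex.I : Quaternion ℂ) + quatI) * gi = gi * (Complex.I + h) :=
    hconj ▸ add_mul_eq_mul_add_mul_mul (hcomm gi) hig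
  have hgi_unit : IsUnit (inlDQ gi) := (Units.isUnit ⟨gi, g, hig, hgi⟩).map inlDQHom
  have hprod : ((Complex.I : Quaternion ℂ) + h) * (Complex.I - h) = 0 := by
    rw [← (hcomm h).mul_self_sub_mul_self_eq, Quaternion.coe_I_mul_coe_I, ← sq, hh, sub_self]
  have hsum : ((Complex.I : Quaternion ℂ) + h) + (Complex.I - h) = Complex.I + Complex.I := by
    abel
  refine ⟨by rw [hmove], ?_, ?_⟩
  · simp only [← inlDQHom_apply, map_mul]
    exact setOf_exists_eq_mul_mul_eq_of_isUnit hgi_unit _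
  · simp only [← inlDQHom_apply]
    exact setOf_mul_eq_zero_eq_setOf_exists_eq_mul
      (Quaternion.isUnit_coe_I_add_coe_I.map inlDQHom)
      (((hcomm _).add_left (hcomm _)).map inlDQHom)
      (by rw [← map_mul, hprod, map_zero]) (by rw [← map_add, hsum])

/-- Let `h` be a real quaternion with `h² = -1`, and `q` a real
quaternion with `q·(i - h) = 0` in `ℍ_ℂ`.  Writing `h = g·𝐢·g⁻¹` with `g` an invertible
real quaternion (inverse `gi`), one has the chain of left-ideal equalities in `𝔻ℍ_ℂ`
  `𝔻ℍ_ℂ·(i + 𝐢)·g⁻¹ = 𝔻ℍ_ℂ·g⁻¹·(i + h) = 𝔻ℍ_ℂ·(i + h)`,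
and in particular the left annihilator of `(i - h)` equals `𝔻ℍ_ℂ·(i + h)`, independently
of the choice of `g`. -/
theorem stmt_9
    (h q g gi : Quaternion ℂ)
    (hreal : isRealQuat h) (hh : h ^ 2 = -1)
    (hqreal : isRealQuat q) (hq : q * ((Complex.I : Quaternion ℂ) - h) = 0)
    (hgreal : isRealQuat g)
    (hgi : g * gi = 1) (hig : gi * g = 1)
    (hconj : h = g * quatI * gi) :
    ({x : DualNumber (Quaternion ℂ) |
        ∃ a, x = a * inlDQ (((Complex.I : Quaternion ℂ) + quatI) * gi)} =
      {x : DualNumber (Quaternion ℂ) |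
        ∃ a, x = a * inlDQ (gi * ((Complex.I : Quaternion ℂ) + h))}) ∧
    ({x : DualNumber (Quaternion ℂ) |
        ∃ a, x = a * inlDQ (gi * ((Complex.I : Quaternion ℂ) + h))} =
      {x : DualNumber (Quaternion ℂ) |
        ∃ a, x = a * inlDQ ((Complex.I : Quaternion ℂ) + h)}) ∧
    ({x : DualNumber (Quaternion ℂ) | x * inlDQ ((Complex.I : Quaternion ℂ) - h) = 0} =
      {x : DualNumber (Quaternion ℂ) |
        ∃ a, x = a * inlDQ ((Complex.I : Quaternion ℂ) + h)}) :=
  stmt_9_general h g gi hh hgi hig hconj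
end

section
/- The map p : (ℙ¹)³ → ℙ⁵ given by (y₁ : y₂ : y₃) ↦ (y₁ : y₂ : y₃ : y₁y₂ : y₁y₃ : y₂y₃) (in suitable bi-homogeneous coordinates with base points at (0,0,0) and (∞,∞,∞)) is birational onto the quartic threefold in ℙ⁵ defined by x₀x₅ = x₁x₄ = x₂x₃. -/
/-!
On the torus the first three coordinates of `quarticMap y` recover `y`, and they scale linearly
while the last three scale quadratically; so a projective coincidence `p(y) = c • p(y')` forces
`c² = c`, i.e. `c = 1`. Conversely, a point `x` of the quartic is `p` of a rescaling of
`(x₀, x₁, x₂)`, the scale `x₃ / (x₀x₁)` being fixed by the coordinate `x₃ = y₀y₁`.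
-/

/-- the cone over the quartic threefold `x₀x₅ = x₁x₄ = x₂x₃` in `ℙ⁵` -/
def quarticCone : Set (Fin 6 → ℂ) :=
  {x | x 0 * x 5 = x 1 * x 4 ∧ x 1 * x 4 = x 2 * x 3}

/-- the map `(y₁,y₂,y₃) ↦ (y₁ : y₂ : y₃ : y₁y₂ : y₁y₃ : y₂y₃)` in an affine chart of `(ℙ¹)³` -/
def quarticMap (y : Fin 3 → ℂ) : Fin 6 → ℂ :=
  ![y 0, y 1, y 2, y 0 * y 1, y 0 * y 2, y 1 * y 2]

theorem quarticMap_mem_quarticCone (y : Fin 3 → ℂ) : quarticMap y ∈ quarticCone :=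
  ⟨by simp [quarticMap]; ring, by simp [quarticMap]; ring⟩

theorem quarticMap_injective : Function.Injective quarticMap := by
  intro y y' h
  ext i
  fin_cases i
  exacts [congrFun h 0, congrFun h 1, congrFun h 2]

theorem eq_one_of_quarticMap_eq_smul {y y' : Fin 3 → ℂ} {c : ℂ} (hc : c ≠ 0)
    (h0 : y' 0 ≠ 0) (h1 : y' 1 ≠ 0) (h : quarticMap y = c • quarticMap y') : c = 1 := by
  have hy0 : y 0 = c * y' 0 := congrFun h 0
  have hy1 : y 1 = c * y' 1 := congrFun h 1
  have hy01 : y 0 * y 1 = c * (y' 0 * y' 1) := congrFun h 3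
  have hcc : c * (c - 1) * (y' 0 * y' 1) = 0 := by
    rw [hy0, hy1] at hy01
    linear_combination hy01
  simpa [hc, h0, h1, sub_eq_zero] using hcc

theorem quarticMap_smul_eq_smul_of_mem_quarticCone {x : Fin 6 → ℂ} (hx : x ∈ quarticCone)
    (h0 : x 0 ≠ 0) (h1 : x 1 ≠ 0) :
    quarticMap ((x 3 / (x 0 * x 1)) • ![x 0, x 1, x 2]) = (x 3 / (x 0 * x 1)) • x := by
  obtain ⟨e05, e14⟩ := hx
  ext i
  fin_cases i <;> simp [quarticMap] <;> field_simp
  · linear_combination -x 3 * e14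
  · linear_combination -x 3 * (e05 + e14)

/-- The map `p : (ℙ¹)³ → ℙ⁵`, `(y₁:y₂:y₃) ↦ (y₁:y₂:y₃:y₁y₂:y₁y₃:y₂y₃)`
(with base points at `(0,0,0)` and `(∞,∞,∞)`) is birational onto the quartic threefold
`x₀x₅ = x₁x₄ = x₂x₃`: its image satisfies the equations, it is injective up to
projective scaling on the dense open set where all coordinates are nonzero, and every
point of the quartic with nonzero coordinates is (projectively) in the image — giving a
rational inverse from the image. -/
theorem stmt_10 :
    (∀ y : Fin 3 → ℂ, quarticMap y ∈ quarticCone) ∧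
    (∀ y y' : Fin 3 → ℂ, (∀ i, y i ≠ 0) → (∀ i, y' i ≠ 0) →
      ∀ c : ℂ, c ≠ 0 → quarticMap y = c • quarticMap y' → y = y') ∧
    (∀ x ∈ quarticCone, (∀ i, x i ≠ 0) →
      ∃ (y : Fin 3 → ℂ) (c : ℂ), c ≠ 0 ∧ quarticMap y = c • x) := by
  refine ⟨quarticMap_mem_quarticCone, ?_, ?_⟩
  · intro y y' _ hy' c hc h
    obtain rfl := eq_one_of_quarticMap_eq_smul hc (hy' 0) (hy' 1) h
    exact quarticMap_injective (by rwa [one_smul] at h)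
  · intro x hx hx0
    exact ⟨_, _, div_ne_zero (hx0 3) (mul_ne_zero (hx0 0) (hx0 1)),
      quarticMap_smul_eq_smul_of_mem_quarticCone hx (hx0 0) (hx0 1)⟩
end
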